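/- The metric space M described in the context (Example 5.2 of the paper) does not have the Lip-LTP: there exist a finite subset N of M (namely N = {x_1,x_2,x_3,y_1,y_2,y_3}), an ε > 0 (namely ε = 1/14), and a function f in the closed unit ball of Lip_0(M) such that for all u,v ∈ M with u ≠ v there are x,y ∈ N with (1−ε)(|f(x)−f(y)| + d(u,v)) > d(x,u) + d(y,v). -/
import Mathlib


/-- The underlying set of the metric space of Example 5.2:
points `x_i, y_i, u_i^j, v_i^j` for `i ∈ {1,2,3}` (coded by `Fin 3`)
and `j ∈ ℕ`. -/
inductive ExPt : Type
  | x : Fin 3 → ExPt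
  | y : Fin 3 → ExPt
  | u : Fin 3 → ℕ → ExPt
  | v : Fin 3 → ℕ → ExPt
deriving DecidableEq

namespace ExPt

/-- Adjacency: precisely the pairs at distance 1, namely
`y_i ~ x_{i+1}` (cyclically), `x_i ~ u_i^j`, `u_i^j ~ v_i^j`, `v_i^j ~ y_i`. -/
def adj : ExPt → ExPt → Bool
  | .y i, .x k => k == i + 1
  | .x k, .y i => k == i + 1
  | .x i, .u k _ => i == k
  | .u k _, .x i => i == k
  | .u i j, .v k l => i == k && j == l
  | .v k l, .u i j => i == k && j == l
  | .v i _, .y k => i == k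
  | .y k, .v i _ => i == k
  | _, _ => false

lemma adj_symm (a b : ExPt) : adj a b = adj b a := by
  cases a <;> cases b <;> rfl

/-- The distance of Example 5.2: `0` on the diagonal, `1` between adjacent
points, and `2` otherwise. -/
noncomputable def exDist (a b : ExPt) : ℝ :=
  if a = b then 0 else if adj a b then 1 else 2

lemma exDist_self (a : ExPt) : exDist a a = 0 := by simp [exDist]

lemma exDist_comm (a b : ExPt) : exDist a b = exDist b a := by
  unfold exDist
  rcases eq_or_ne a b with rfl | h
  · rfl
  · rw [if_neg h, if_neg (Ne.symm h), adj_symm]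

lemma one_le_exDist {a b : ExPt} (h : a ≠ b) : 1 ≤ exDist a b := by
  unfold exDist
  rw [if_neg h]
  split <;> norm_num

lemma exDist_le_two (a b : ExPt) : exDist a b ≤ 2 := by
  unfold exDist
  split
  · norm_num
  · split <;> norm_num

lemma exDist_triangle (a b c : ExPt) : exDist a c ≤ exDist a b + exDist b c := by
  rcases eq_or_ne a b with rfl | hab
  · rw [exDist_self, zero_add]
  rcases eq_or_ne b c with rfl | hbc
  · rw [exDist_self, add_zero]
  have h1 := one_le_exDist hab
  have h2 := one_le_exDist hbc
  have h3 := exDist_le_two a c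
  linarith

lemma exDist_eq_zero {a b : ExPt} (h : exDist a b = 0) : a = b := by
  by_contra hne
  have := one_le_exDist hne
  rw [h] at this
  norm_num at this

instance : TopologicalSpace ExPt := ⊥

instance : DiscreteTopology ExPt := ⟨rfl⟩

noncomputable instance : MetricSpace ExPt :=
  MetricSpace.ofDistTopology exDist exDist_self exDist_comm exDist_triangle
    (fun s => by
      constructor
      · intro _ x hx
        refine ⟨1 / 2, by norm_num, fun y hy => ?_⟩
        have : x = y := by
          by_contra hne
          have := one_le_exDist hne
          linarith
        rwa [← this]
      · intro _
        exact isOpen_discrete s)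
    (fun a b h => exDist_eq_zero h)

lemma dist_def (a b : ExPt) : dist a b = exDist a b := rfl

end ExPt

/-- The finite set `N = {x_1,x_2,x_3,y_1,y_2,y_3}`. -/
def NSet : Set ExPt :=
  {ExPt.x 0, ExPt.x 1, ExPt.x 2, ExPt.y 0, ExPt.y 1, ExPt.y 2}

noncomputable def fEx : ExPt → ℝ
  | .x i => ![(0:ℝ), 5/4, 1] i
  | .y i => ![(5/4:ℝ), 0, -1/4] i
  | .u i _ => ![(5/12:ℝ), 5/6, 7/12] i
  | .v i _ => ![(5/6:ℝ), 5/12, 1/6] i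

lemma fEx_bound (p : ExPt) : -1/4 ≤ fEx p ∧ fEx p ≤ 5/4 := by
  cases p with
  | x i => fin_cases i <;> norm_num [fEx]
  | y i => fin_cases i <;> norm_num [fEx]
  | u i j => fin_cases i <;> norm_num [fEx]
  | v i j => fin_cases i <;> norm_num [fEx]

lemma fEx_adj : ∀ p q : ExPt, ExPt.adj p q = true → |fEx p - fEx q| ≤ 1 := by
  intro p q h
  cases p <;> cases q <;>
    simp only [ExPt.adj, beq_iff_eq, Bool.and_eq_true, Bool.false_eq_true] at h
  case x.y a b =>
    fin_cases a <;> fin_cases b <;>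
      first | exact absurd h (by decide) | norm_num [fEx, abs_le]
  case y.x a b =>
    fin_cases a <;> fin_cases b <;>
      first | exact absurd h (by decide) | norm_num [fEx, abs_le]
  case x.u a b l =>
    fin_cases a <;> fin_cases b <;>
      first | exact absurd h (by decide) | norm_num [fEx, abs_le]
  case u.x a j b =>
    fin_cases a <;> fin_cases b <;>
      first | exact absurd h (by decide) | norm_num [fEx, abs_le]
  case u.v a j b l =>
    obtain ⟨h1, rfl⟩ := h
    fin_cases a <;> fin_cases b <;>
      first | exact absurd h1 (by decide) | norm_num [fEx, abs_le]
  case v.u a j b l =>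
    obtain ⟨h1, rfl⟩ := h
    fin_cases a <;> fin_cases b <;>
      first | exact absurd h1 (by decide) | norm_num [fEx, abs_le]
  case v.y a j b =>
    fin_cases a <;> fin_cases b <;>
      first | exact absurd h (by decide) | norm_num [fEx, abs_le]
  case y.v a b l =>
    fin_cases a <;> fin_cases b <;>
      first | exact absurd h (by decide) | norm_num [fEx, abs_le]

lemma fEx_lip : LipschitzWith 1 fEx := by
  rw [lipschitzWith_iff_dist_le_mul]
  intro p q
  rcases eq_or_ne p q with rfl | h
  · simp
  · rw [Real.dist_eq, ExPt.dist_def]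
    simp only [NNReal.coe_one, one_mul]
    unfold ExPt.exDist
    rw [if_neg h]
    by_cases ha : ExPt.adj p q
    · rw [if_pos ha]; exact fEx_adj p q ha
    · rw [if_neg ha]
      obtain ⟨h1, h2⟩ := fEx_bound p
      obtain ⟨h3, h4⟩ := fEx_bound q
      rw [abs_sub_le_iff]
      constructor <;> linarith

lemma dist_eq_one (p q : ExPt) (h : p ≠ q) (ha : ExPt.adj p q = true) :
    dist p q = 1 := by
  rw [ExPt.dist_def]; unfold ExPt.exDist; rw [if_neg h, if_pos ha]

lemma dist_eq_two (p q : ExPt) (h : p ≠ q) (ha : ExPt.adj p q = false) :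
    dist p q = 2 := by
  rw [ExPt.dist_def]; unfold ExPt.exDist
  rw [if_neg h, if_neg (by rw [ha]; exact Bool.false_ne_true)]

lemma one_le_dist {p q : ExPt} (h : p ≠ q) : (1:ℝ) ≤ dist p q := by
  rw [ExPt.dist_def]; exact ExPt.one_le_exDist h

lemma mem_x (i : Fin 3) : ExPt.x i ∈ NSet := by fin_cases i <;> simp [NSet]

lemma mem_y (i : Fin 3) : ExPt.y i ∈ NSet := by fin_cases i <;> simp [NSet]

lemma habs (i : Fin 3) : |fEx (ExPt.x i) - fEx (ExPt.y i)| = 5/4 := by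
  fin_cases i <;> rw [abs_eq (by norm_num)] <;> norm_num [fEx]

lemma habs' (i : Fin 3) : |fEx (ExPt.y i) - fEx (ExPt.x i)| = 5/4 := by
  rw [abs_sub_comm]; exact habs i

lemma case_NN {u v : ExPt} (hu : u ∈ NSet) (hv : v ∈ NSet) (h : u ≠ v) :
    ∃ x ∈ NSet, ∃ y ∈ NSet,
      dist x u + dist y v < (1 - 1 / 14) * (|fEx x - fEx y| + dist u v) := by
  refine ⟨u, hu, v, hv, ?_⟩
  rw [dist_self, dist_self]
  have h1 := one_le_dist h
  have h2 := abs_nonneg (fEx u - fEx v)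
  linarith

/-- Example 5.2: `M` fails the Lip-LTP, witnessed by `N = {x_i, y_i}`,
`ε = 1/14` and a suitable `f` in the unit ball of `Lip₀(M)`
(the base point is `0 = x_1`). -/
theorem stmt16 :
    ∃ f : ExPt → ℝ, f (ExPt.x 0) = 0 ∧ LipschitzWith 1 f ∧
      ∀ u v : ExPt, u ≠ v →
        ∃ x ∈ NSet, ∃ y ∈ NSet,
          dist x u + dist y v < (1 - 1 / 14) * (|f x - f y| + dist u v) := by
  refine ⟨fEx, by norm_num [fEx], fEx_lip, ?_⟩
  intro u v huv
  cases u with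
  | x i =>
    cases v with
    | x k => exact case_NN (mem_x i) (mem_x k) huv
    | y k => exact case_NN (mem_x i) (mem_y k) huv
    | u k l =>
      by_cases hik : i = k
      · subst hik
        refine ⟨.x i, mem_x i, .y i, mem_y i, ?_⟩
        rw [dist_self, dist_eq_two (.y i) (.u i l) (by simp) rfl,
          dist_eq_one (.x i) (.u i l) (by simp) (by simp [ExPt.adj]), habs i]
        norm_num
      · refine ⟨.x i, mem_x i, .x k, mem_x k, ?_⟩
        rw [dist_self, dist_eq_one (.x k) (.u k l) (by simp) (by simp [ExPt.adj]),
          dist_eq_two (.x i) (.u k l) (by simp) (by simp [ExPt.adj, hik])]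
        have := abs_nonneg (fEx (ExPt.x i) - fEx (ExPt.x k))
        linarith
    | v k l =>
      refine ⟨.x i, mem_x i, .y k, mem_y k, ?_⟩
      rw [dist_self, dist_eq_one (.y k) (.v k l) (by simp) (by simp [ExPt.adj]),
        dist_eq_two (.x i) (.v k l) (by simp) rfl]
      have := abs_nonneg (fEx (ExPt.x i) - fEx (ExPt.y k))
      linarith
  | y i =>
    cases v with
    | x k => exact case_NN (mem_y i) (mem_x k) huv
    | y k => exact case_NN (mem_y i) (mem_y k) huv
    | u k l =>
      refine ⟨.y i, mem_y i, .x k, mem_x k, ?_⟩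
      rw [dist_self, dist_eq_one (.x k) (.u k l) (by simp) (by simp [ExPt.adj]),
        dist_eq_two (.y i) (.u k l) (by simp) rfl]
      have := abs_nonneg (fEx (ExPt.y i) - fEx (ExPt.x k))
      linarith
    | v k l =>
      by_cases hik : i = k
      · subst hik
        refine ⟨.y i, mem_y i, .x i, mem_x i, ?_⟩
        rw [dist_self, dist_eq_two (.x i) (.v i l) (by simp) rfl,
          dist_eq_one (.y i) (.v i l) (by simp) (by simp [ExPt.adj]), habs' i]
        norm_num
      · refine ⟨.y i, mem_y i, .y k, mem_y k, ?_⟩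
        rw [dist_self, dist_eq_one (.y k) (.v k l) (by simp) (by simp [ExPt.adj]),
          dist_eq_two (.y i) (.v k l) (by simp)
            (by simp [ExPt.adj]; exact fun h => hik h.symm)]
        have := abs_nonneg (fEx (ExPt.y i) - fEx (ExPt.y k))
        linarith
  | u i j =>
    cases v with
    | x k =>
      by_cases hik : i = k
      · subst hik
        refine ⟨.y i, mem_y i, .x i, mem_x i, ?_⟩
        rw [dist_self, dist_eq_two (.y i) (.u i j) (by simp) rfl,
          dist_eq_one (.u i j) (.x i) (by simp) (by simp [ExPt.adj]), habs' i]
        norm_num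
      · refine ⟨.x i, mem_x i, .x k, mem_x k, ?_⟩
        rw [dist_self, dist_eq_one (.x i) (.u i j) (by simp) (by simp [ExPt.adj]),
          dist_eq_two (.u i j) (.x k) (by simp)
            (by simp [ExPt.adj]; exact fun h => hik h.symm)]
        have := abs_nonneg (fEx (ExPt.x i) - fEx (ExPt.x k))
        linarith
    | y k =>
      refine ⟨.x i, mem_x i, .y k, mem_y k, ?_⟩
      rw [dist_self, dist_eq_one (.x i) (.u i j) (by simp) (by simp [ExPt.adj]),
        dist_eq_two (.u i j) (.y k) (by simp) rfl]
      have := abs_nonneg (fEx (ExPt.x i) - fEx (ExPt.y k))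
      linarith
    | u k l =>
      refine ⟨.x i, mem_x i, .y i, mem_y i, ?_⟩
      rw [dist_eq_one (.x i) (.u i j) (by simp) (by simp [ExPt.adj]),
        dist_eq_two (.y i) (.u k l) (by simp) rfl,
        dist_eq_two (.u i j) (.u k l) huv rfl, habs i]
      norm_num
    | v k l =>
      by_cases hik : i = k
      · subst hik
        refine ⟨.x i, mem_x i, .y i, mem_y i, ?_⟩
        rw [dist_eq_one (.x i) (.u i j) (by simp) (by simp [ExPt.adj]),
          dist_eq_one (.y i) (.v i l) (by simp) (by simp [ExPt.adj]), habs i]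
        have := one_le_dist huv
        linarith
      · refine ⟨.x i, mem_x i, .y i, mem_y i, ?_⟩
        rw [dist_eq_one (.x i) (.u i j) (by simp) (by simp [ExPt.adj]),
          dist_eq_two (.y i) (.v k l) (by simp)
            (by simp [ExPt.adj]; exact fun h => hik h.symm),
          dist_eq_two (.u i j) (.v k l) (by simp)
            (by simp [ExPt.adj]; exact fun h _ => hik h), habs i]
        norm_num
  | v i j =>
    cases v with
    | x k =>
      refine ⟨.y i, mem_y i, .x k, mem_x k, ?_⟩
      rw [dist_self, dist_eq_one (.y i) (.v i j) (by simp) (by simp [ExPt.adj]),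
        dist_eq_two (.v i j) (.x k) (by simp) rfl]
      have := abs_nonneg (fEx (ExPt.y i) - fEx (ExPt.x k))
      linarith
    | y k =>
      by_cases hik : i = k
      · subst hik
        refine ⟨.x i, mem_x i, .y i, mem_y i, ?_⟩
        rw [dist_self, dist_eq_two (.x i) (.v i j) (by simp) rfl,
          dist_eq_one (.v i j) (.y i) (by simp) (by simp [ExPt.adj]), habs i]
        norm_num
      · refine ⟨.y i, mem_y i, .y k, mem_y k, ?_⟩
        rw [dist_self, dist_eq_one (.y i) (.v i j) (by simp) (by simp [ExPt.adj]),
          dist_eq_two (.v i j) (.y k) (by simp) (by simp [ExPt.adj, hik])]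
        have := abs_nonneg (fEx (ExPt.y i) - fEx (ExPt.y k))
        linarith
    | u k l =>
      by_cases hik : i = k
      · subst hik
        refine ⟨.y i, mem_y i, .x i, mem_x i, ?_⟩
        rw [dist_eq_one (.y i) (.v i j) (by simp) (by simp [ExPt.adj]),
          dist_eq_one (.x i) (.u i l) (by simp) (by simp [ExPt.adj]), habs' i]
        have := one_le_dist huv
        linarith
      · refine ⟨.y i, mem_y i, .x i, mem_x i, ?_⟩
        rw [dist_eq_one (.y i) (.v i j) (by simp) (by simp [ExPt.adj]),
          dist_eq_two (.x i) (.u k l) (by simp) (by simp [ExPt.adj, hik]),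
          dist_eq_two (.v i j) (.u k l) (by simp)
            (by simp [ExPt.adj]; exact fun h _ => hik h.symm), habs' i]
        norm_num
    | v k l =>
      refine ⟨.y i, mem_y i, .x i, mem_x i, ?_⟩
      rw [dist_eq_one (.y i) (.v i j) (by simp) (by simp [ExPt.adj]),
        dist_eq_two (.x i) (.v k l) (by simp) rfl,
        dist_eq_two (.v i j) (.v k l) huv rfl, habs' i]
      norm_num
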